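/- For the Doob martingale M_ℓ = E[Σ_{j≠i} z_j ⟨φ_{i'}, φ_{π_j}⟩ | π^{−i}_{1→ℓ}, π_i = i'] built from a uniformly random ordered k-subset Π of {1,…,C} with k ≤ C/2, the martingale differences satisfy |M_ℓ − M_{ℓ−1}| ≤ c_ℓ := 2μ(|z_ℓ| + |z_{ℓ+1}| + ‖z‖_1/(C−k)), and Σ_{ℓ=1}^{k−1} c_ℓ² ≤ 36 μ² ‖z‖_2². -/

import Mathlib

open Finset

/-- Inner product between columns `a` and `b` of `Φ`: `⟨φ_a, φ_b⟩ = ∑_n conj(Φ n a) * Φ n b`. -/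
noncomputable def colIP {N C : ℕ} (Φ : Matrix (Fin N) (Fin C) ℂ) (a b : Fin C) : ℂ :=
  ∑ n, (starRingEnd ℂ) (Φ n a) * Φ n b

/-- Worst-case coherence `μ = max_{i ≠ j} |⟨φ_i, φ_j⟩|`. -/
noncomputable def wcoh {N C : ℕ} (Φ : Matrix (Fin N) (Fin C) ℂ) : ℝ :=
  ⨆ p : {p : Fin C × Fin C // p.1 ≠ p.2}, ‖colIP Φ p.1.1 p.1.2‖

/-- Average coherence `ν = (1/(C−1)) max_i |∑_{j ≠ i} ⟨φ_i, φ_j⟩|`. -/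
noncomputable def acoh {N C : ℕ} (Φ : Matrix (Fin N) (Fin C) ℂ) : ℝ :=
  (1 / ((C : ℝ) - 1)) *
    ⨆ i : Fin C, ‖∑ j ∈ Finset.univ.filter (fun j => j ≠ i), colIP Φ i j‖


open MeasureTheory ProbabilityTheory

instance {n : ℕ} : MeasurableSpace (Fin n) := ⊤

/-- The coordinates of an ordered tuple with the `i`-th one removed: `rem i m` is the index in
`Fin k` of the `m`-th coordinate of `π^{−i}`. -/
def rem {k : ℕ} (i : Fin k) (m : Fin (k - 1)) : Fin k :=
  if h : (m : ℕ) < (i : ℕ) then ⟨m, by omega⟩ else ⟨m + 1, by omega⟩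

/-- The filtration generated by the first `ℓ` coordinates of `π^{−i}` on the space of
injective functions `Fin k → Fin C`. -/
def remFiltration (k C : ℕ) (i : Fin k) (ℓ : ℕ) :
    MeasurableSpace {f : Fin k → Fin C // Function.Injective f} :=
  MeasurableSpace.comap
    (fun ω => fun m : Fin (k - 1) => if (m : ℕ) < ℓ then ((ω.1 (rem i m) : ℕ) + 1) else 0)
    inferInstance


/-!
Under the uniform law conditioned on `π_i = i'`, conditioning on the first `ℓ` coordinates of
`π^{-i}` averages the summand over the injective tuples agreeing with `π` on a set `J` of
positions. Revealing one more position `j₀` is undone by a coupling: each tuple agreeing with `ω`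
on `J` arises exactly once from a tuple agreeing with `ω` on `insert j₀ J` by swapping its value
`ω j₀` with a value `b` that `ω` does not take on `J`. Such a swap moves only the summands at `j₀`
and at the position holding `b`, each by at most `2μ|z_j|`. Averaging over the at least `C - k`
admissible values of `b` gives `c_ℓ`, since `j₀` is one of the positions `ℓ`, `ℓ + 1`. The bound
on `∑ c_ℓ²` follows from `(a + b + c)² ≤ 3(a² + b² + c²)`, Cauchy–Schwarz `‖z‖₁² ≤ k‖z‖₂²` and
`k ≤ C - k`.
-/

open scoped BigOperators

section FiberAverage

variable {Ω β E : Type*} [DecidableEq β] [NormedAddCommGroup E] [NormedSpace ℝ E]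

noncomputable def fiberAvg (S : Finset Ω) (q : Ω → β) (F : Ω → E) (ω : Ω) : E :=
  (#{f ∈ S | q f = q ω} : ℝ)⁻¹ • ∑ f ∈ S with q f = q ω, F f

theorem fiberAvg_eq_expect (S : Finset Ω) (q : Ω → β) (F : Ω → ℂ) (ω : Ω) :
    fiberAvg S q F ω = 𝔼 f ∈ S with q f = q ω, F f := by
  rw [fiberAvg, expect, ← NNRat.cast_smul_eq_nnqsmul ℝ]
  simp

theorem sum_fiberAvg_filter_preimage (S : Finset Ω) (q : Ω → β) (F : Ω → E) (t : Set β)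
    [DecidablePred (· ∈ t)] :
    ∑ ω ∈ S with q ω ∈ t, fiberAvg S q F ω = ∑ ω ∈ S with q ω ∈ t, F ω := by
  set T := {ω ∈ S | q ω ∈ t}
  have hmaps : ∀ ω ∈ T, q ω ∈ T.image q := fun ω hω => mem_image_of_mem q hω
  rw [← sum_fiberwise_of_maps_to hmaps, ← sum_fiberwise_of_maps_to hmaps]
  refine sum_congr rfl fun b hb => ?_
  obtain ⟨ω₀, hω₀, rfl⟩ := mem_image.1 hb
  have hfiber : {ω ∈ T | q ω = q ω₀} = {ω ∈ S | q ω = q ω₀} := by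
    ext ω
    simp only [T, mem_filter]
    constructor
    · exact fun h => ⟨h.1.1, h.2⟩
    · exact fun h => ⟨⟨h.1, h.2 ▸ (mem_filter.1 hω₀).2⟩, h.2⟩
  have hconst : ∀ ω ∈ {ω ∈ S | q ω = q ω₀}, fiberAvg S q F ω = fiberAvg S q F ω₀ := by
    intro ω hω
    rw [fiberAvg, fiberAvg, (mem_filter.1 hω).2]
  have hpos : (#{ω ∈ S | q ω = q ω₀} : ℝ) ≠ 0 :=
    Nat.cast_ne_zero.2 (card_ne_zero_of_mem (mem_filter.2 ⟨(mem_filter.1 hω₀).1, rfl⟩))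
  rw [hfiber, sum_congr rfl hconst, sum_const, fiberAvg, ← Nat.cast_smul_eq_nsmul ℝ, smul_smul,
    mul_inv_cancel₀ hpos, one_smul]

end FiberAverage

section UniformCond

variable {Ω E : Type*} [Fintype Ω] [Nonempty Ω] [MeasurableSpace Ω]
  [DiscreteMeasurableSpace Ω] [NormedAddCommGroup E] [NormedSpace ℝ E] [CompleteSpace E]

theorem measureReal_uniformOfFintype_cond_singleton [DecidableEq Ω] (S : Finset Ω) (x : Ω) :
    ((PMF.uniformOfFintype Ω).toMeasure[|↑S]).real {x} = if x ∈ S then (#S : ℝ)⁻¹ else 0 := by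
  rw [measureReal_def, cond_apply MeasurableSet.of_discrete,
    PMF.toMeasure_uniformOfFintype_apply _ MeasurableSet.of_discrete]
  split_ifs with hx
  · rw [Set.inter_eq_right.2 (Set.singleton_subset_iff.2 hx),
      PMF.toMeasure_uniformOfFintype_apply _ MeasurableSet.of_discrete]
    have hΩ : (Fintype.card Ω : ℝ) ≠ 0 := Nat.cast_ne_zero.2 Fintype.card_ne_zero
    simp only [SetLike.coe_sort_coe, Fintype.card_coe, Fintype.card_unique, Nat.cast_one, one_div,
      ENNReal.toReal_mul, ENNReal.toReal_inv, ENNReal.toReal_div, ENNReal.toReal_natCast, inv_div]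
    field_simp
  · rw [Set.inter_singleton_eq_empty.2 hx]
    simp

theorem setIntegral_uniformOfFintype_cond (S : Finset Ω) (s : Set Ω) [DecidablePred (· ∈ s)]
    (g : Ω → E) :
    ∫ x in s, g x ∂(PMF.uniformOfFintype Ω).toMeasure[|↑S] =
      (#S : ℝ)⁻¹ • ∑ x ∈ S with x ∈ s, g x := by
  classical
  have hs : s = ↑(univ.filter (· ∈ s)) := by ext; simp
  nth_rw 1 [hs]
  rw [setIntegral_finset _ Integrable.of_finite.integrableOn, smul_sum]
  simp_rw [measureReal_uniformOfFintype_cond_singleton, ite_smul, zero_smul]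
  rw [← sum_filter, filter_filter]
  exact sum_congr (by ext; simp [and_comm]) fun _ _ => rfl

theorem condExp_uniformOfFintype_cond_comap {β : Type*} [DecidableEq β] [mβ : MeasurableSpace β]
    [Countable β] [MeasurableSingletonClass β] (S : Finset Ω) (q : Ω → β) (F : Ω → E) :
    (PMF.uniformOfFintype Ω).toMeasure[|↑S][F | mβ.comap q]
      =ᵐ[(PMF.uniformOfFintype Ω).toMeasure[|↑S]] fiberAvg S q F := by
  classical
  have hm : mβ.comap q ≤ ‹MeasurableSpace Ω› := (measurable_of_countable q).comap_le
  refine (ae_eq_condExp_of_forall_setIntegral_eq hm Integrable.of_finite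
    (fun _ _ _ => Integrable.of_finite.integrableOn) ?_ ?_).symm
  · rintro _ ⟨t, -, rfl⟩ -
    rw [setIntegral_uniformOfFintype_cond, setIntegral_uniformOfFintype_cond]
    exact congrArg _ (sum_fiberAvg_filter_preimage S q F t)
  · have hfactor : fiberAvg S q F =
        (fun b => (#{f ∈ S | q f = b} : ℝ)⁻¹ • ∑ f ∈ S with q f = b, F f) ∘ q := rfl
    rw [hfactor]
    exact (StronglyMeasurable.of_discrete.comp_measurable (comap_measurable q)).aestronglyMeasurable

end UniformCond

section InjectiveTuples

variable {k C : ℕ}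

abbrev InjTuple (k C : ℕ) := {f : Fin k → Fin C // Function.Injective f}

def InjTuple.swapValues (b a : Fin C) (f : InjTuple k C) : InjTuple k C :=
  ⟨Equiv.swap b a ∘ f.1, (Equiv.swap b a).injective.comp f.2⟩

@[simp]
theorem InjTuple.swapValues_apply (b a : Fin C) (f : InjTuple k C) (j : Fin k) :
    (f.swapValues b a).1 j = Equiv.swap b a (f.1 j) := rfl

@[simp]
theorem InjTuple.swapValues_swapValues (b a : Fin C) (f : InjTuple k C) :
    (f.swapValues b a).swapValues b a = f :=
  Subtype.ext <| funext fun _ => Equiv.swap_apply_self _ _ _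

def agreeOn (ω : InjTuple k C) (J : Finset (Fin k)) : Finset (InjTuple k C) :=
  {f | ∀ j ∈ J, f.1 j = ω.1 j}

@[simp]
theorem mem_agreeOn {ω f : InjTuple k C} {J : Finset (Fin k)} :
    f ∈ agreeOn ω J ↔ ∀ j ∈ J, f.1 j = ω.1 j := by
  simp [agreeOn]

theorem self_mem_agreeOn (ω : InjTuple k C) (J : Finset (Fin k)) : ω ∈ agreeOn ω J :=
  mem_agreeOn.2 fun _ _ => rfl

theorem expect_agreeOn_eq_expect_swapValues {M : Type*} [AddCommMonoid M] [Module ℚ≥0 M]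
    (ω : InjTuple k C) {J : Finset (Fin k)} {j₀ : Fin k} (hj₀ : j₀ ∉ J) (G : InjTuple k C → M) :
    𝔼 g ∈ agreeOn ω J, G g =
      𝔼 b ∈ univ \ J.image ω.1, 𝔼 f ∈ agreeOn ω (insert j₀ J), G (f.swapValues b (ω.1 j₀)) := by
  have hne : ∀ j ∈ J, ω.1 j ≠ ω.1 j₀ := fun j hj h => hj₀ (ω.2 h ▸ hj)
  rw [← expect_product' (univ \ J.image ω.1) (agreeOn ω (insert j₀ J))
    fun b f => G (f.swapValues b (ω.1 j₀))]
  refine expect_nbij' (fun g => (g.1 j₀, g.swapValues (g.1 j₀) (ω.1 j₀)))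
    (fun p => p.2.swapValues p.1 (ω.1 j₀)) ?_ ?_ ?_ ?_ ?_
  · intro g hg
    rw [mem_agreeOn] at hg
    simp only [mem_product, mem_sdiff, mem_univ, mem_image, true_and, mem_agreeOn,
      forall_mem_insert, InjTuple.swapValues_apply, Equiv.swap_apply_left, not_exists, not_and]
    have hgj₀ : ∀ j ∈ J, g.1 j ≠ g.1 j₀ := fun j hj h => hj₀ (g.2 h ▸ hj)
    refine ⟨fun j hj h => hgj₀ j hj ((hg j hj).trans h), fun j hj => ?_⟩
    rw [Equiv.swap_apply_of_ne_of_ne (hgj₀ j hj) (hg j hj ▸ hne j hj), hg j hj]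
  · rintro ⟨b, f⟩ hp
    simp only [mem_product, mem_sdiff, mem_univ, mem_image, true_and, mem_agreeOn,
      forall_mem_insert, not_exists, not_and] at hp
    simp only [mem_agreeOn, InjTuple.swapValues_apply]
    intro j hj
    rw [hp.2.2 j hj, Equiv.swap_apply_of_ne_of_ne (fun h => hp.1 j hj h) (hne j hj)]
  · intro g _
    simp
  · rintro ⟨b, f⟩ hp
    simp only [mem_product, mem_agreeOn, forall_mem_insert] at hp
    simp [hp.2.1]
  · intro g _
    simp

theorem apply_mem_sdiff_image (ω : InjTuple k C) {J : Finset (Fin k)} {j₀ : Fin k}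
    (hj₀ : j₀ ∉ J) : ω.1 j₀ ∈ univ \ J.image ω.1 := by
  simp only [mem_sdiff, mem_univ, mem_image, true_and, not_exists, not_and]
  exact fun j hj h => hj₀ (ω.2 h ▸ hj)

theorem sub_le_card_sdiff_image (ω : InjTuple k C) (J : Finset (Fin k)) :
    C - k ≤ #(univ \ J.image ω.1) := by
  have h1 := le_card_sdiff (J.image ω.1) univ
  have h2 := card_image_le (s := J) (f := ω.1)
  have h3 := card_le_univ J
  simp only [card_univ, Fintype.card_fin] at h1 h3
  omega

theorem expect_agreeOn_insert_sub_expect_agreeOn {M : Type*} [AddCommGroup M] [Module ℚ≥0 M]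
    (ω : InjTuple k C) {J : Finset (Fin k)} {j₀ : Fin k} (hj₀ : j₀ ∉ J) (F : InjTuple k C → M) :
    𝔼 f ∈ agreeOn ω (insert j₀ J), F f - 𝔼 g ∈ agreeOn ω J, F g =
      𝔼 f ∈ agreeOn ω (insert j₀ J), 𝔼 b ∈ univ \ J.image ω.1,
        (F f - F (f.swapValues b (ω.1 j₀))) := by
  have hpool : (univ \ J.image ω.1).Nonempty := ⟨_, apply_mem_sdiff_image ω hj₀⟩
  simp_rw [expect_sub_distrib, expect_const hpool]
  rw [expect_comm, ← expect_agreeOn_eq_expect_swapValues ω hj₀]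

end InjectiveTuples

section Coherence

variable {N C : ℕ} (Φ : Matrix (Fin N) (Fin C) ℂ)

theorem wcoh_nonneg : 0 ≤ wcoh Φ := Real.iSup_nonneg fun _ => norm_nonneg _

theorem norm_colIP_le_wcoh {a b : Fin C} (h : a ≠ b) : ‖colIP Φ a b‖ ≤ wcoh Φ :=
  le_ciSup (f := fun p : {p : Fin C × Fin C // p.1 ≠ p.2} => ‖colIP Φ p.1.1 p.1.2‖)
    (Set.finite_range _).bddAbove ⟨(a, b), h⟩

theorem norm_colIP_sub_colIP_le {i' a b : Fin C} (ha : a ≠ i') (hb : b ≠ i') :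
    ‖colIP Φ i' a - colIP Φ i' b‖ ≤ 2 * wcoh Φ := by
  linarith [norm_sub_le (colIP Φ i' a) (colIP Φ i' b), norm_colIP_le_wcoh Φ ha.symm,
    norm_colIP_le_wcoh Φ hb.symm]

theorem norm_colIP_sub_colIP_swap_le {i' a b v : Fin C} (hv : v ≠ i') (ha : a ≠ i')
    (hb : b ≠ i') :
    ‖colIP Φ i' v - colIP Φ i' (Equiv.swap b a v)‖ ≤ if v = a ∨ v = b then 2 * wcoh Φ else 0 := by
  split_ifs with h
  · refine norm_colIP_sub_colIP_le Φ hv ?_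
    rcases h with rfl | rfl
    · rwa [Equiv.swap_apply_right]
    · rwa [Equiv.swap_apply_left]
  · rw [not_or] at h
    rw [Equiv.swap_apply_of_ne_of_ne h.2 h.1, sub_self, norm_zero]

end Coherence

section CoherenceSum

variable {N C k : ℕ} (Φ : Matrix (Fin N) (Fin C) ℂ) (i : Fin k) (i' : Fin C) (z : Fin k → ℂ)

noncomputable def cohSum (f : InjTuple k C) : ℂ :=
  ∑ j ∈ univ.filter (fun j => j ≠ i), z j * colIP Φ i' (f.1 j)

theorem norm_cohSum_sub_swapValues_le {f : InjTuple k C} (hf : f.1 i = i') {j₀ : Fin k}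
    (hj₀ : j₀ ≠ i) {b : Fin C} (hb : b ≠ i') :
    ‖cohSum Φ i i' z f - cohSum Φ i i' z (f.swapValues b (f.1 j₀))‖ ≤
      2 * wcoh Φ * (‖z j₀‖ + ∑ j, if f.1 j = b then ‖z j‖ else 0) := by
  have hne : ∀ j, j ≠ i → f.1 j ≠ i' := fun j hj h => hj (f.2 (h.trans hf.symm))
  have hμ := wcoh_nonneg Φ
  have hterm : ∀ j ∈ univ.filter (fun j => j ≠ i),
      ‖z j * colIP Φ i' (f.1 j) - z j * colIP Φ i' ((f.swapValues b (f.1 j₀)).1 j)‖ ≤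
        2 * wcoh Φ * ((if j = j₀ then ‖z j‖ else 0) + (if f.1 j = b then ‖z j‖ else 0)) := by
    intro j hj
    rw [← mul_sub, norm_mul, InjTuple.swapValues_apply]
    refine (mul_le_mul_of_nonneg_left (norm_colIP_sub_colIP_swap_le Φ
      (hne j (mem_filter.1 hj).2) (hne j₀ hj₀) hb) (norm_nonneg _)).trans ?_
    simp only [f.2.eq_iff]
    split_ifs <;> first | tauto | nlinarith [norm_nonneg (z j)]
  calc _ = ‖∑ j ∈ univ.filter (fun j => j ≠ i),
        (z j * colIP Φ i' (f.1 j) - z j * colIP Φ i' ((f.swapValues b (f.1 j₀)).1 j))‖ := by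
        rw [cohSum, cohSum, sum_sub_distrib]
    _ ≤ ∑ j ∈ univ.filter (fun j => j ≠ i),
        2 * wcoh Φ * ((if j = j₀ then ‖z j‖ else 0) + (if f.1 j = b then ‖z j‖ else 0)) :=
      (norm_sum_le _ _).trans (sum_le_sum hterm)
    _ ≤ ∑ j, 2 * wcoh Φ * ((if j = j₀ then ‖z j‖ else 0) + (if f.1 j = b then ‖z j‖ else 0)) :=
      sum_le_sum_of_subset_of_nonneg (subset_univ _) fun _ _ _ => by positivity
    _ = _ := by rw [← mul_sum, sum_add_distrib, sum_ite_eq']; simp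

theorem expect_norm_cohSum_sub_swapValues_le {f : InjTuple k C} (hf : f.1 i = i') {j₀ : Fin k}
    (hj₀ : j₀ ≠ i) {P : Finset (Fin C)} (hP : i' ∉ P) :
    𝔼 b ∈ P, ‖cohSum Φ i i' z f - cohSum Φ i i' z (f.swapValues b (f.1 j₀))‖ ≤
      2 * wcoh Φ * (‖z j₀‖ + (∑ j, ‖z j‖) / #P) := by
  have hμ := wcoh_nonneg Φ
  rcases P.eq_empty_or_nonempty with rfl | hPne
  · simp only [expect_empty, card_empty, CharP.cast_eq_zero, div_zero, add_zero]
    positivity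
  have hcount : ∑ b ∈ P, ∑ j, (if f.1 j = b then ‖z j‖ else 0) ≤ ∑ j, ‖z j‖ := by
    rw [sum_comm]
    refine sum_le_sum fun j _ => ?_
    rw [sum_ite_eq]
    split_ifs <;> simp
  have hP0 : (0 : ℝ) < #P := by exact_mod_cast hPne.card_pos
  calc _ ≤ 𝔼 b ∈ P, 2 * wcoh Φ * (‖z j₀‖ + ∑ j, if f.1 j = b then ‖z j‖ else 0) :=
        expect_le_expect fun b hb =>
          norm_cohSum_sub_swapValues_le Φ i i' z hf hj₀ (ne_of_mem_of_not_mem hb hP)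
    _ = 2 * wcoh Φ * (‖z j₀‖ + (∑ b ∈ P, ∑ j, if f.1 j = b then ‖z j‖ else 0) / #P) := by
        rw [expect_eq_sum_div_card, ← mul_sum, sum_add_distrib, sum_const, nsmul_eq_mul]
        field_simp
    _ ≤ _ := by gcongr

theorem norm_expect_cohSum_agreeOn_insert_sub_le (hkC : k < C) {ω : InjTuple k C}
    (hω : ω.1 i = i') {J : Finset (Fin k)} (hi : i ∈ J) {j₀ : Fin k} (hj₀ : j₀ ∉ J) :
    ‖𝔼 f ∈ agreeOn ω (insert j₀ J), cohSum Φ i i' z f - 𝔼 g ∈ agreeOn ω J, cohSum Φ i i' z g‖ ≤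
      2 * wcoh Φ * (‖z j₀‖ + (∑ j, ‖z j‖) / ((C : ℝ) - k)) := by
  have hμ := wcoh_nonneg Φ
  have hpool : i' ∉ univ \ J.image ω.1 := by
    simpa only [mem_sdiff, mem_univ, true_and, not_not, mem_image] using ⟨i, hi, hω⟩
  have hcard : (C : ℝ) - k ≤ #(univ \ J.image ω.1) := by
    rw [← Nat.cast_sub hkC.le]
    exact_mod_cast sub_le_card_sdiff_image ω J
  have hCk : (0 : ℝ) < C - k := sub_pos.2 (by exact_mod_cast hkC)
  rw [expect_agreeOn_insert_sub_expect_agreeOn ω hj₀]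
  calc _ ≤ 𝔼 f ∈ agreeOn ω (insert j₀ J), 𝔼 b ∈ univ \ J.image ω.1,
          ‖cohSum Φ i i' z f - cohSum Φ i i' z (f.swapValues b (ω.1 j₀))‖ :=
        RCLike.norm_expect_le (K := ℝ) |>.trans
          (expect_le_expect fun _ _ => RCLike.norm_expect_le (K := ℝ))
    _ ≤ 2 * wcoh Φ * (‖z j₀‖ + (∑ j, ‖z j‖) / #(univ \ J.image ω.1)) := by
        refine expect_le ⟨ω, self_mem_agreeOn ω _⟩ fun f hf => ?_
        simp only [mem_agreeOn, forall_mem_insert] at hf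
        rw [← hf.1]
        exact expect_norm_cohSum_sub_swapValues_le Φ i i' z ((hf.2 i hi).trans hω)
          (ne_of_mem_of_not_mem hi hj₀).symm hpool
    _ ≤ _ := by gcongr

end CoherenceSum

section RemovedCoordinate

variable {k C : ℕ}

theorem rem_ne (i : Fin k) (m : Fin (k - 1)) : rem i m ≠ i := by
  unfold rem
  split_ifs <;> simp only [ne_eq, Fin.ext_iff] <;> omega

theorem rem_injective (i : Fin k) : Function.Injective (rem i) := by
  intro m m' h
  unfold rem at h
  split_ifs at h <;> simp only [Fin.ext_iff, Nat.add_right_cancel_iff] at h ⊢ <;> omega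

def remPrefix (i : Fin k) (ℓ : ℕ) (ω : InjTuple k C) : Fin (k - 1) → ℕ :=
  fun m => if (m : ℕ) < ℓ then (ω.1 (rem i m) : ℕ) + 1 else 0

def remPositions (i : Fin k) (ℓ : ℕ) : Finset (Fin k) :=
  (univ.filter fun m : Fin (k - 1) => (m : ℕ) < ℓ).image (rem i)

theorem remPrefix_eq_iff {i : Fin k} {ℓ : ℕ} {f ω : InjTuple k C} :
    remPrefix i ℓ f = remPrefix i ℓ ω ↔ ∀ j ∈ remPositions i ℓ, f.1 j = ω.1 j := by
  simp only [funext_iff, remPrefix, remPositions, forall_mem_image, mem_filter, mem_univ,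
    true_and]
  refine forall_congr' fun m => ?_
  split_ifs with hm <;> simp [hm, Fin.val_inj]

theorem remPositions_succ (i : Fin k) {n : ℕ} (hn : n < k - 1) :
    remPositions i (n + 1) = insert (rem i ⟨n, hn⟩) (remPositions i n) := by
  rw [remPositions, remPositions, ← image_insert]
  congr 1
  ext m
  simp only [Order.lt_add_one_iff, mem_filter, mem_univ, true_and, mem_insert, Fin.ext_iff]
  omega

theorem rem_notMem_insert_remPositions (i : Fin k) {n : ℕ} (hn : n < k - 1) :
    rem i ⟨n, hn⟩ ∉ insert i (remPositions i n) := by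
  simp only [mem_insert, remPositions, mem_image, mem_filter, mem_univ, true_and,
    (rem_injective i).eq_iff, not_or, not_exists, not_and]
  exact ⟨rem_ne i _, fun m hm h => (h ▸ hm).false⟩

theorem filter_remPrefix_eq_agreeOn {i : Fin k} {i' : Fin C} {ω : InjTuple k C}
    (hω : ω.1 i = i') (ℓ : ℕ) :
    {f ∈ univ.filter (fun f : InjTuple k C => f.1 i = i') | remPrefix i ℓ f = remPrefix i ℓ ω} =
      agreeOn ω (insert i (remPositions i ℓ)) := by
  ext f
  simp [remPrefix_eq_iff, hω]

theorem condExp_remFiltration_ae_eq [Nonempty (InjTuple k C)] (i : Fin k) (i' : Fin C)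
    (F : InjTuple k C → ℂ) (ℓ : ℕ) :
    (PMF.uniformOfFintype (InjTuple k C)).toMeasure[|{f | f.1 i = i'}][F | remFiltration k C i ℓ]
      =ᵐ[(PMF.uniformOfFintype (InjTuple k C)).toMeasure[|{f | f.1 i = i'}]]
        fun ω => 𝔼 f ∈ agreeOn ω (insert i (remPositions i ℓ)), F f := by
  have hfilt : remFiltration k C i ℓ = MeasurableSpace.comap (remPrefix i ℓ) inferInstance := rfl
  rw [← coe_filter_univ, hfilt]
  filter_upwards [condExp_uniformOfFintype_cond_comap _ (remPrefix i ℓ) F,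
    ae_cond_mem MeasurableSet.of_discrete] with ω hF hω
  rw [hF, fiberAvg_eq_expect, filter_remPrefix_eq_agreeOn (mem_filter.1 hω).2]

end RemovedCoordinate

section DiffBound

variable {E : Type*} [SeminormedAddCommGroup E] {k : ℕ}

noncomputable def diffBound (μ : ℝ) (z : Fin k → E) (C ℓ : ℕ) : ℝ :=
  2 * μ * ((if h : ℓ - 1 < k then ‖z ⟨ℓ - 1, h⟩‖ else 0) + (if h : ℓ < k then ‖z ⟨ℓ, h⟩‖ else 0) +
    (∑ j, ‖z j‖) / ((C : ℝ) - k))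

theorem two_mul_norm_apply_rem_add_le_diffBound {μ : ℝ} (hμ : 0 ≤ μ) (z : Fin k → E) (C : ℕ)
    (i : Fin k) {n : ℕ} (hn : n < k - 1) :
    2 * μ * (‖z (rem i ⟨n, hn⟩)‖ + (∑ j, ‖z j‖) / ((C : ℝ) - k)) ≤ diffBound μ z C (n + 1) := by
  rw [diffBound, Nat.add_sub_cancel, dif_pos (by omega), dif_pos (by omega)]
  gcongr
  unfold rem
  split_ifs
  · exact le_add_of_nonneg_right (norm_nonneg _)
  · exact le_add_of_nonneg_left (norm_nonneg _)

theorem sum_sq_diffBound_le {C : ℕ} (hkC : 2 * k ≤ C) (z : Fin k → E) (μ : ℝ) :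
    ∑ ℓ ∈ Icc 1 (k - 1), diffBound μ z C ℓ ^ 2 ≤ 36 * μ ^ 2 * ∑ j, ‖z j‖ ^ 2 := by
  set a : ℕ → ℝ := fun n => if h : n < k then ‖z ⟨n, h⟩‖ else 0
  set s := (∑ j, ‖z j‖) / ((C : ℝ) - k)
  set Z2 := ∑ j, ‖z j‖ ^ 2
  have hIcc : Icc 1 (k - 1) = Ico 1 k := by ext; simp only [mem_Icc, mem_Ico]; omega
  have hsum_a : ∑ n ∈ range k, a n ^ 2 = Z2 := by
    rw [← Fin.sum_univ_eq_sum_range (fun n => a n ^ 2)]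
    simp [a, Z2]
  have hshift : ∑ ℓ ∈ Ico 1 k, a (ℓ - 1) ^ 2 ≤ Z2 := by
    rw [sum_Ico_eq_sum_range, ← hsum_a]
    simp only [add_tsub_cancel_left]
    exact sum_le_sum_of_subset_of_nonneg (range_subset_range.2 (Nat.sub_le k 1))
      fun _ _ _ => sq_nonneg _
  have hsame : ∑ ℓ ∈ Ico 1 k, a ℓ ^ 2 ≤ Z2 := by
    rw [← hsum_a, range_eq_Ico]
    exact sum_le_sum_of_subset_of_nonneg (Ico_subset_Ico_left zero_le_one)
      fun _ _ _ => sq_nonneg _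
  have hconst : ∑ ℓ ∈ Ico 1 k, s ^ 2 ≤ Z2 := by
    rw [sum_const, Nat.card_Ico, nsmul_eq_mul]
    have hCS : (∑ j, ‖z j‖) ^ 2 ≤ k * Z2 := by
      simpa using sq_sum_le_card_mul_sum_sq (s := univ) (f := fun j => ‖z j‖)
    rcases Nat.eq_zero_or_pos k with rfl | hk
    · simp [Z2]
    have hCk : (k : ℝ) ≤ C - k := by
      have : ((2 * k : ℕ) : ℝ) ≤ C := by exact_mod_cast hkC
      push_cast at this
      linarith
    have hk0 : (0 : ℝ) < k := by exact_mod_cast hk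
    have hZ2 : 0 ≤ Z2 := sum_nonneg fun _ _ => sq_nonneg _
    calc ((k - 1 : ℕ) : ℝ) * s ^ 2 ≤ k * s ^ 2 := by gcongr; exact_mod_cast Nat.sub_le k 1
      _ = k * (∑ j, ‖z j‖) ^ 2 / (C - k) ^ 2 := by rw [div_pow]; ring
      _ ≤ k * (k * Z2) / (k * k) := by gcongr; nlinarith
      _ = Z2 := by field_simp
  calc _ ≤ ∑ ℓ ∈ Ico 1 k, 12 * μ ^ 2 * (a (ℓ - 1) ^ 2 + a ℓ ^ 2 + s ^ 2) := by
        rw [hIcc]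
        refine sum_le_sum fun ℓ _ => ?_
        rw [diffBound]
        nlinarith [sq_nonneg (a (ℓ - 1) - a ℓ), sq_nonneg (a ℓ - s), sq_nonneg (a (ℓ - 1) - s),
          sq_nonneg μ]
    _ = 12 * μ ^ 2 * (∑ ℓ ∈ Ico 1 k, a (ℓ - 1) ^ 2 + ∑ ℓ ∈ Ico 1 k, a ℓ ^ 2 +
          ∑ ℓ ∈ Ico 1 k, s ^ 2) := by
        rw [← sum_add_distrib, ← sum_add_distrib, mul_sum]
    _ ≤ 12 * μ ^ 2 * (Z2 + Z2 + Z2) := by gcongr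
    _ = _ := by ring

end DiffBound

theorem stmt7_general {N C k : ℕ} (hkC : 2 * k ≤ C)
    [Nonempty {f : Fin k → Fin C // Function.Injective f}]
    (Φ : Matrix (Fin N) (Fin C) ℂ)
    (i : Fin k) (i' : Fin C) (z : Fin k → ℂ)
    (μc : Measure {f : Fin k → Fin C // Function.Injective f})
    (hμc : μc =
      (PMF.uniformOfFintype {f : Fin k → Fin C // Function.Injective f}).toMeasure[|
        {f : {f : Fin k → Fin C // Function.Injective f} | f.1 i = i'}])
    (M : ℕ → {f : Fin k → Fin C // Function.Injective f} → ℂ)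
    (hM : ∀ ℓ, M ℓ =
      μc[fun ω => ∑ j ∈ Finset.univ.filter (fun j => j ≠ i), z j * colIP Φ i' (ω.1 j)|
        remFiltration k C i ℓ])
    (c : ℕ → ℝ)
    (hc : ∀ ℓ, c ℓ = 2 * wcoh Φ *
      ((if h : ℓ - 1 < k then ‖z ⟨ℓ - 1, h⟩‖ else 0) +
        (if h : ℓ < k then ‖z ⟨ℓ, h⟩‖ else 0) +
        (∑ j, ‖z j‖) / ((C : ℝ) - k))) :
    (∀ ℓ, 1 ≤ ℓ → ℓ ≤ k - 1 → ∀ᵐ ω ∂μc, ‖M ℓ ω - M (ℓ - 1) ω‖ ≤ c ℓ) ∧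
      ∑ ℓ ∈ Finset.Icc 1 (k - 1), c ℓ ^ 2 ≤ 36 * wcoh Φ ^ 2 * ∑ j, ‖z j‖ ^ 2 := by
  obtain rfl : c = diffBound (wcoh Φ) z C := funext hc
  refine ⟨fun ℓ hℓ1 hℓk => ?_, sum_sq_diffBound_le hkC z _⟩
  obtain ⟨n, rfl⟩ : ∃ n, ℓ = n + 1 := ⟨ℓ - 1, by omega⟩
  have hn : n < k - 1 := by omega
  subst hμc
  filter_upwards [(hM (n + 1)).symm ▸ condExp_remFiltration_ae_eq i i' (cohSum Φ i i' z) (n + 1),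
    (hM n).symm ▸ condExp_remFiltration_ae_eq i i' (cohSum Φ i i' z) n,
    ae_cond_mem MeasurableSet.of_discrete] with ω hMsucc hMn hω
  rw [hMsucc, Nat.add_sub_cancel, hMn, remPositions_succ i hn, insert_comm]
  exact (norm_expect_cohSum_agreeOn_insert_sub_le Φ i i' z (by omega) hω (mem_insert_self _ _)
    (rem_notMem_insert_remPositions i hn)).trans
    (two_mul_norm_apply_rem_add_le_diffBound (wcoh_nonneg Φ) z C i hn)

/-- The Doob martingale `M_ℓ = E[∑_{j≠i} z_j ⟨φ_{i'}, φ_{π_j}⟩ | π^{−i}_{1→ℓ}, π_i = i']`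
has differences bounded by `c_ℓ = 2μ(|z_ℓ| + |z_{ℓ+1}| + ‖z‖₁/(C−k))`, and
`∑_{ℓ=1}^{k−1} c_ℓ² ≤ 36 μ² ‖z‖₂²`. -/
theorem stmt7 {N C k : ℕ} (hk : 2 ≤ k) (hkC : 2 * k ≤ C)
    [Nonempty {f : Fin k → Fin C // Function.Injective f}]
    (Φ : Matrix (Fin N) (Fin C) ℂ) (hunit : ∀ i : Fin C, colIP Φ i i = 1)
    (i : Fin k) (i' : Fin C) (z : Fin k → ℂ)
    (μc : Measure {f : Fin k → Fin C // Function.Injective f})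
    (hμc : μc =
      (PMF.uniformOfFintype {f : Fin k → Fin C // Function.Injective f}).toMeasure[|
        {f : {f : Fin k → Fin C // Function.Injective f} | f.1 i = i'}])
    (M : ℕ → {f : Fin k → Fin C // Function.Injective f} → ℂ)
    (hM : ∀ ℓ, M ℓ =
      μc[fun ω => ∑ j ∈ Finset.univ.filter (fun j => j ≠ i), z j * colIP Φ i' (ω.1 j)|
        remFiltration k C i ℓ])
    (c : ℕ → ℝ)
    (hc : ∀ ℓ, c ℓ = 2 * wcoh Φ *
      ((if h : ℓ - 1 < k then ‖z ⟨ℓ - 1, h⟩‖ else 0) +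
        (if h : ℓ < k then ‖z ⟨ℓ, h⟩‖ else 0) +
        (∑ j, ‖z j‖) / ((C : ℝ) - k))) :
    (∀ ℓ, 1 ≤ ℓ → ℓ ≤ k - 1 → ∀ᵐ ω ∂μc, ‖M ℓ ω - M (ℓ - 1) ω‖ ≤ c ℓ) ∧
      ∑ ℓ ∈ Finset.Icc 1 (k - 1), c ℓ ^ 2 ≤ 36 * wcoh Φ ^ 2 * ∑ j, ‖z j‖ ^ 2 :=
  stmt7_general hkC Φ i i' z μc hμc M hM c hc
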